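/- Let λ ∈ (−1/2, ∞)^n. Then, uniformly in x ∈ (0,∞)^n and R > 0, the measure w_λ^+(B(x,R)) of the Euclidean ball B(x,R) ∩ (0,∞)^n with respect to dw_λ^+(y) = Π_{j=1}^n y_j^{2λ_j} dy is comparable to R^n · Π_{j=1}^n (x_j + R)^{2λ_j}; i.e., there exist constants c, C > 0 depending only on λ and n such that c·R^n·Π_j (x_j+R)^{2λ_j} ≤ w_λ^+(B(x,R)) ≤ C·R^n·Π_j (x_j+R)^{2λ_j}. -/

import Mathlib

open MeasureTheory
open scoped BigOperators

/-- The measure of `B(x,R) ∩ (0,∞)^n` with respect to `∏ y_j^{2λ_j} dy`. -/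
noncomputable def wMeasBall {n : ℕ} (l : Fin n → ℝ) (x : EuclideanSpace ℝ (Fin n)) (R : ℝ) : ℝ :=
  ∫ y in Metric.ball x R ∩ {y : EuclideanSpace ℝ (Fin n) | ∀ j, 0 < y j},
    ∏ j, (y j) ^ (2 * l j)

/-!
`B(x,R) ∩ (0,∞)ⁿ` lies in the box `∏ⱼ (max(xⱼ - R, 0), xⱼ + R)` and contains the cube
`∏ⱼ (xⱼ + R/K, xⱼ + 2R/K)` for `K = 2(√n + 1)`. The weight is a product of one-variable
weights, so its integral over either box factorizes, and each factor is comparable to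
`R (xⱼ + R)^{2λⱼ}`: on an interval of length `≍ R` whose points are all `≍ x + R`, the weight
`t^p` is within a constant factor of `(x + R)^p`, while for `x ≤ 2R` the exact value
`∫₀^{x+R} t^p dt = (x + R)^{p+1}/(p+1)` suffices; this is where `p = 2λⱼ > -1` enters.
-/

open Set

namespace Real

variable {p K b t : ℝ}

theorem rpow_le_rpow_abs_mul_of_mem_Icc (hK : 1 ≤ K) (hb : 0 < b) (ht : t ∈ Icc (b / K) b) :
    t ^ p ≤ K ^ |p| * b ^ p := by
  have ht0 : 0 < t := lt_of_lt_of_le (by positivity) ht.1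
  rcases le_or_gt 0 p with hp | hp
  · calc t ^ p ≤ b ^ p := rpow_le_rpow ht0.le ht.2 hp
      _ ≤ K ^ |p| * b ^ p := le_mul_of_one_le_left (by positivity) (one_le_rpow hK (abs_nonneg p))
  · calc t ^ p ≤ (b / K) ^ p := rpow_le_rpow_of_nonpos (by positivity) ht.1 hp.le
      _ = K ^ |p| * b ^ p := by
        rw [div_rpow hb.le (by positivity), abs_of_neg hp, rpow_neg (by positivity)]
        ring

theorem rpow_neg_abs_mul_le_rpow_of_mem_Icc (hK : 1 ≤ K) (hb : 0 < b) (ht : t ∈ Icc (b / K) b) :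
    K ^ (-|p|) * b ^ p ≤ t ^ p := by
  have ht0 : 0 < t := lt_of_lt_of_le (by positivity) ht.1
  have h := rpow_le_rpow_abs_mul_of_mem_Icc (p := -p) hK hb ht
  rw [abs_neg, rpow_neg ht0.le, rpow_neg hb.le] at h
  rw [rpow_neg (by positivity)]
  have := (inv_le_comm₀ (by positivity) (by positivity)).1 h
  rwa [mul_inv, inv_inv] at this

end Real

section OneDimensional

variable {p : ℝ}

theorem integrableOn_rpow_Ioo (hp : -1 < p) (a b : ℝ) : IntegrableOn (· ^ p) (Ioo a b) :=
  (intervalIntegral.intervalIntegrable_rpow' hp).1.mono_set Ioo_subset_Ioc_self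

theorem setIntegral_rpow_Ioo_zero (hp : -1 < p) {b : ℝ} (hb : 0 ≤ b) :
    ∫ t in Ioo 0 b, t ^ p = b ^ (p + 1) / (p + 1) := by
  rw [← integral_Ioc_eq_integral_Ioo, ← intervalIntegral.integral_of_le hb,
    integral_rpow (Or.inl hp), Real.zero_rpow (by linarith), sub_zero]

theorem setIntegral_Ioo_le_of_le_const {f : ℝ → ℝ} {a b M : ℝ} (hab : a ≤ b)
    (hf : IntegrableOn f (Ioo a b)) (h : ∀ t ∈ Ioo a b, f t ≤ M) :
    ∫ t in Ioo a b, f t ≤ M * (b - a) := by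
  calc ∫ t in Ioo a b, f t ≤ ∫ _ in Ioo a b, M :=
        setIntegral_mono_on hf (integrableOn_const measure_Ioo_lt_top.ne) measurableSet_Ioo h
    _ = M * (b - a) := by
      rw [setIntegral_const, Real.volume_real_Ioo_of_le hab, smul_eq_mul, mul_comm]

theorem le_setIntegral_Ioo_of_const_le {f : ℝ → ℝ} {a b m : ℝ} (hab : a ≤ b)
    (hf : IntegrableOn f (Ioo a b)) (h : ∀ t ∈ Ioo a b, m ≤ f t) :
    m * (b - a) ≤ ∫ t in Ioo a b, f t := by
  simpa only [Real.volume_real_Ioo_of_le hab] using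
    setIntegral_ge_of_const_le_real measurableSet_Ioo measure_Ioo_lt_top.ne h hf

theorem setIntegral_rpow_Ioo_le (hp : -1 < p) {x R : ℝ} (hx : 0 ≤ x) (hR : 0 < R) :
    ∫ t in Ioo (max (x - R) 0) (x + R), t ^ p ≤
      (3 / (p + 1) + 2 * 3 ^ |p|) * (R * (x + R) ^ p) := by
  have hp1 : 0 < p + 1 := by linarith
  have hb : 0 < x + R := by linarith
  have hbp : 0 ≤ R * (x + R) ^ p := by positivity
  rcases le_or_gt x (2 * R) with hx2 | hx2
  · calc ∫ t in Ioo (max (x - R) 0) (x + R), t ^ p ≤ ∫ t in Ioo 0 (x + R), t ^ p := by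
          refine setIntegral_mono_set (integrableOn_rpow_Ioo hp _ _) ?_
            (Ioo_subset_Ioo (le_max_right _ _) le_rfl).eventuallyLE
          exact ae_restrict_of_forall_mem measurableSet_Ioo fun t ht => Real.rpow_nonneg ht.1.le _
      _ = (x + R) / (p + 1) * (x + R) ^ p := by
          rw [setIntegral_rpow_Ioo_zero hp hb.le, Real.rpow_add_one hb.ne']
          ring
      _ ≤ 3 * R / (p + 1) * (x + R) ^ p := by gcongr; linarith
      _ = 3 / (p + 1) * (R * (x + R) ^ p) := by ring
      _ ≤ _ := by gcongr; exact le_add_of_nonneg_right (by positivity)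
  · rw [max_eq_left (by linarith)]
    calc ∫ t in Ioo (x - R) (x + R), t ^ p ≤ 3 ^ |p| * (x + R) ^ p * (x + R - (x - R)) := by
          refine setIntegral_Ioo_le_of_le_const (by linarith) (integrableOn_rpow_Ioo hp _ _)
            fun t ht => Real.rpow_le_rpow_abs_mul_of_mem_Icc (by norm_num) hb ⟨?_, ht.2.le⟩
          linarith [ht.1]
      _ = 2 * 3 ^ |p| * (R * (x + R) ^ p) := by ring
      _ ≤ _ := by gcongr; exact le_add_of_nonneg_left (by positivity)

theorem le_setIntegral_rpow_Ioo (hp : -1 < p) {K : ℝ} (hK : 2 ≤ K) {x R : ℝ} (hx : 0 ≤ x)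
    (hR : 0 < R) :
    K ^ (-|p|) / K * (R * (x + R) ^ p) ≤ ∫ t in Ioo (x + R / K) (x + 2 * (R / K)), t ^ p := by
  have hb : 0 < x + R := by linarith
  have hRK : R / K ≤ R / 2 := div_le_div_of_nonneg_left hR.le two_pos hK
  calc K ^ (-|p|) / K * (R * (x + R) ^ p)
      = K ^ (-|p|) * (x + R) ^ p * (x + 2 * (R / K) - (x + R / K)) := by field_simp; ring
    _ ≤ _ := by
        have hxK : x / K ≤ x := div_le_self hx (by linarith)
        refine le_setIntegral_Ioo_of_const_le (by linarith [div_pos hR (by linarith : (0:ℝ) < K)])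
          (integrableOn_rpow_Ioo hp _ _) fun t ht =>
            Real.rpow_neg_abs_mul_le_rpow_of_mem_Icc (by linarith) hb ⟨?_, by linarith [ht.2]⟩
        rw [add_div]
        linarith [ht.1]


end OneDimensional

section EuclideanBox

variable {ι : Type*} [Fintype ι]

omit [Fintype ι] in
theorem toLp_preimage_euclideanBox (s : ι → Set ℝ) :
    MeasurableEquiv.toLp 2 (ι → ℝ) ⁻¹' {y : EuclideanSpace ℝ ι | ∀ i, y i ∈ s i} =
      univ.pi s := by
  ext; simp

theorem setIntegral_euclideanBox_prod (s : ι → Set ℝ) (f : ι → ℝ → ℝ) :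
    ∫ y in {y : EuclideanSpace ℝ ι | ∀ i, y i ∈ s i}, ∏ i, f i (y i) =
      ∏ i, ∫ t in s i, f i t := by
  rw [← (EuclideanSpace.volume_preserving_symm_measurableEquiv_toLp ι).symm
    |>.setIntegral_preimage_emb (MeasurableEquiv.measurableEmbedding _), MeasurableEquiv.symm_symm,
    toLp_preimage_euclideanBox, volume_pi, Measure.restrict_pi_pi]
  exact integral_fintype_prod_eq_prod f

theorem integrableOn_euclideanBox_prod {s : ι → Set ℝ} {f : ι → ℝ → ℝ}
    (hf : ∀ i, IntegrableOn (f i) (s i)) :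
    IntegrableOn (fun y : EuclideanSpace ℝ ι => ∏ i, f i (y i)) {y | ∀ i, y i ∈ s i} := by
  rw [← (EuclideanSpace.volume_preserving_symm_measurableEquiv_toLp ι).symm
    |>.integrableOn_comp_preimage (MeasurableEquiv.measurableEmbedding _),
    MeasurableEquiv.symm_symm, toLp_preimage_euclideanBox, IntegrableOn, volume_pi, Measure.restrict_pi_pi]
  exact Integrable.fintype_prod hf

theorem EuclideanSpace.dist_le_sqrt_card_mul {x y : EuclideanSpace ℝ ι} {r : ℝ} (hr : 0 ≤ r)
    (h : ∀ i, dist (y i) (x i) ≤ r) : dist y x ≤ √(Fintype.card ι) * r := by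
  rw [EuclideanSpace.dist_eq, ← Real.sqrt_sq hr, ← Real.sqrt_mul (Nat.cast_nonneg _)]
  refine Real.sqrt_le_sqrt ?_
  calc ∑ i, dist (y i) (x i) ^ 2 ≤ ∑ _i : ι, r ^ 2 :=
        Finset.sum_le_sum fun i _ => pow_le_pow_left₀ dist_nonneg (h i) 2
    _ = Fintype.card ι * r ^ 2 := by simp

theorem ball_inter_orthant_subset_box (x : EuclideanSpace ℝ ι) (R : ℝ) :
    Metric.ball x R ∩ {y | ∀ j, 0 < y j} ⊆
      {y | ∀ j, y j ∈ Ioo (max (x j - R) 0) (x j + R)} := by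
  rintro y ⟨hy, hpos⟩ j
  have h := (PiLp.dist_apply_le y x j).trans_lt hy
  rw [Real.dist_eq, abs_lt] at h
  exact ⟨max_lt (by linarith) (hpos j), by linarith⟩

theorem cube_subset_ball_inter_orthant {x : EuclideanSpace ℝ ι} (hx : ∀ j, 0 ≤ x j)
    {R K : ℝ} (hR : 0 < R) (hK : 2 * √(Fintype.card ι) < K) :
    {y | ∀ j, y j ∈ Ioo (x j + R / K) (x j + 2 * (R / K))} ⊆
      Metric.ball x R ∩ {y | ∀ j, 0 < y j} := by
  have hK0 : 0 < K := lt_of_le_of_lt (by positivity) hK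
  have hRK : 0 < R / K := div_pos hR hK0
  intro y hy
  refine ⟨?_, fun j => by linarith [hx j, (hy j).1]⟩
  have hdist : ∀ j, dist (y j) (x j) ≤ 2 * (R / K) := fun j => by
    rw [Real.dist_eq, abs_le]
    constructor <;> linarith [(hy j).1, (hy j).2]
  calc dist y x ≤ √(Fintype.card ι) * (2 * (R / K)) :=
        EuclideanSpace.dist_le_sqrt_card_mul (by positivity) hdist
    _ = 2 * √(Fintype.card ι) / K * R := by ring
    _ < 1 * R := by gcongr; rwa [div_lt_one hK0]
    _ = R := one_mul R

end EuclideanBox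

section WeightedBall

variable {n : ℕ} {l : Fin n → ℝ}

theorem wMeasBall_le_prod_setIntegral (hl : ∀ j, -1 < 2 * l j) (x : EuclideanSpace ℝ (Fin n))
    (R : ℝ) :
    wMeasBall l x R ≤ ∏ j, ∫ t in Ioo (max (x j - R) 0) (x j + R), t ^ (2 * l j) := by
  rw [← setIntegral_euclideanBox_prod]
  refine setIntegral_mono_set
    (integrableOn_euclideanBox_prod fun j => integrableOn_rpow_Ioo (hl j) _ _) ?_
    (ball_inter_orthant_subset_box x R).eventuallyLE
  refine ae_restrict_of_forall_mem (by measurability) fun y hy => ?_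
  exact Finset.prod_nonneg fun j _ => Real.rpow_nonneg ((le_max_right _ _).trans (hy j).1.le) _

theorem prod_setIntegral_le_wMeasBall (hl : ∀ j, -1 < 2 * l j) {x : EuclideanSpace ℝ (Fin n)}
    (hx : ∀ j, 0 ≤ x j) {R K : ℝ} (hR : 0 < R) (hK : 2 * √n < K) :
    ∏ j, ∫ t in Ioo (x j + R / K) (x j + 2 * (R / K)), t ^ (2 * l j) ≤ wMeasBall l x R := by
  rw [← setIntegral_euclideanBox_prod]
  refine setIntegral_mono_set ((integrableOn_euclideanBox_prod fun j =>
    integrableOn_rpow_Ioo (hl j) _ _).mono_set (ball_inter_orthant_subset_box x R)) ?_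
    (cube_subset_ball_inter_orthant hx hR (by simpa using hK)).eventuallyLE
  refine ae_restrict_of_forall_mem (by measurability) fun y hy => ?_
  exact Finset.prod_nonneg fun j _ => Real.rpow_nonneg (hy.2 j).le _

end WeightedBall

theorem Finset.prod_mul_const_mul {ι M : Type*} [Fintype ι] [CommMonoid M]
    (a g : ι → M) (R : M) :
    ∏ j, a j * (R * g j) = (∏ j, a j) * (R ^ Fintype.card ι * ∏ j, g j) := by
  rw [Finset.prod_mul_distrib, Finset.prod_mul_distrib, Finset.prod_const, Finset.card_univ]

theorem stmt4 {n : ℕ} (l : Fin n → ℝ) (hl : ∀ j, -1/2 < l j) :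
    ∃ c C : ℝ, 0 < c ∧ 0 < C ∧
      ∀ (x : EuclideanSpace ℝ (Fin n)) (R : ℝ), (∀ j, 0 < x j) → 0 < R →
        c * (R ^ n * ∏ j, (x j + R) ^ (2 * l j)) ≤ wMeasBall l x R ∧
        wMeasBall l x R ≤ C * (R ^ n * ∏ j, (x j + R) ^ (2 * l j)) := by
  have hp : ∀ j, -1 < 2 * l j := fun j => by linarith [hl j]
  have hp1 : ∀ j, 0 < 2 * l j + 1 := fun j => by linarith [hp j]
  set K := 2 * (√n + 1)
  have hK2 : 2 ≤ K := by linarith [Real.sqrt_nonneg n]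
  refine ⟨∏ j, K ^ (-|2 * l j|) / K, ∏ j, (3 / (2 * l j + 1) + 2 * 3 ^ |2 * l j|),
    Finset.prod_pos fun j _ => by positivity,
    Finset.prod_pos fun j _ => by have := hp1 j; positivity,
    fun x R hx hR => ⟨?_, ?_⟩⟩
  · calc (∏ j, K ^ (-|2 * l j|) / K) * (R ^ n * ∏ j, (x j + R) ^ (2 * l j))
        = ∏ j, K ^ (-|2 * l j|) / K * (R * (x j + R) ^ (2 * l j)) := by
          rw [Finset.prod_mul_const_mul, Fintype.card_fin]
      _ ≤ ∏ j, ∫ t in Ioo (x j + R / K) (x j + 2 * (R / K)), t ^ (2 * l j) :=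
          Finset.prod_le_prod (fun j _ => by have := hx j; positivity)
            fun j _ => le_setIntegral_rpow_Ioo (hp j) hK2 (hx j).le hR
      _ ≤ wMeasBall l x R :=
          prod_setIntegral_le_wMeasBall hp (fun j => (hx j).le) hR (by linarith)
  · calc wMeasBall l x R ≤ ∏ j, ∫ t in Ioo (max (x j - R) 0) (x j + R), t ^ (2 * l j) :=
          wMeasBall_le_prod_setIntegral hp x R
      _ ≤ ∏ j, (3 / (2 * l j + 1) + 2 * 3 ^ |2 * l j|) * (R * (x j + R) ^ (2 * l j)) :=
          Finset.prod_le_prod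
            (fun j _ => setIntegral_nonneg measurableSet_Ioo fun t ht =>
              Real.rpow_nonneg ((le_max_right _ _).trans ht.1.le) _)
            fun j _ => setIntegral_rpow_Ioo_le (hp j) (hx j).le hR
      _ = _ := by rw [Finset.prod_mul_const_mul, Fintype.card_fin]
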